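/- Let X* have support coordinate i₀ with x*_{i₀} > 0, ‖x*‖₂ = 1, and initialize X(0) by X_{i₀}(0) = θ̂/√3 with θ̂ ∈ [√(1 − 9√(log n/m)), √(1 + 9√(log n/m))] and X_i(0) = 0 otherwise. Then the initial Bregman divergence of the hypentropy map satisfies D_Φ(x*, X(0)) ≤ ‖x*‖₁ · log(1/β) + 1. -/

import Mathlib

/-!
Write `φ t = t arsinh (t / β) - √(t² + β²)`, so that `Φ` is separable and its Bregman
divergence is the sum of the scalar divergences of `φ`. Because `X(0)` is supported on `i₀`
with value `a ≥ 0` and `x*_{i₀} > 0`, the divergence is at most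
`∑ᵢ (φ (x*ᵢ) - φ 0) + √(a² + β²) - β`.

Since `φ' t = log (1 / β) + log (t + √(t² + β²))` and that logarithm is at most `t` (as `β ≤ 1`)
and at most `2t - (1 - β)`, integrating from `0` gives `φ t - φ 0 ≤ |t| log (1 / β)` plus
`t² / 2`, resp. `t² - (1 - β) |t|`. Summing with `‖x*‖₂ = 1 ≤ ‖x*‖₁` bounds the sum by
`‖x*‖₁ log (1 / β) + min (1 / 2) β`, and `a² ≤ 2 / 3` makes
`√(a² + β²) - β + min (1 / 2) β ≤ 1`.
-/

open Finset Real

noncomputable section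

def hypentropy (β t : ℝ) : ℝ := t * arsinh (t / β) - √(t ^ 2 + β ^ 2)

def hypentropyBregman (β x y : ℝ) : ℝ :=
  hypentropy β x - hypentropy β y - arsinh (y / β) * (x - y)

end

section Hypentropy

variable {β : ℝ}

lemma sqrt_one_add_div_sq (hβ : 0 < β) (t : ℝ) : √(1 + (t / β) ^ 2) = √(t ^ 2 + β ^ 2) / β := by
  rw [eq_div_iff hβ.ne', ← Real.sqrt_sq hβ.le, ← Real.sqrt_mul (by positivity),
    Real.sqrt_sq hβ.le]
  congr 1
  field_simp
  ring

lemma arsinh_div_eq_log (hβ : 0 < β) (t : ℝ) :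
    arsinh (t / β) = log (t + √(t ^ 2 + β ^ 2)) + log (1 / β) := by
  have hs : |t| < √(t ^ 2 + β ^ 2) := by
    rw [← Real.sqrt_sq_eq_abs]; exact Real.sqrt_lt_sqrt (sq_nonneg t) (by nlinarith)
  have hpos : 0 < t + √(t ^ 2 + β ^ 2) := by linarith [neg_abs_le t]
  rw [arsinh, sqrt_one_add_div_sq hβ, ← add_div, Real.log_div hpos.ne' hβ.ne', one_div,
    Real.log_inv, sub_eq_add_neg]

lemma hasDerivAt_hypentropy (hβ : 0 < β) (t : ℝ) :
    HasDerivAt (hypentropy β) (arsinh (t / β)) t := by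
  have hs : 0 < √(t ^ 2 + β ^ 2) := Real.sqrt_pos.2 (by positivity)
  have hlin : HasDerivAt (fun t : ℝ => t * arsinh (t / β))
      (1 * arsinh (t / β) + t * ((√(1 + (t / β) ^ 2))⁻¹ * (1 / β))) t :=
    (hasDerivAt_id t).mul ((Real.hasDerivAt_arsinh _).comp t ((hasDerivAt_id t).div_const β))
  have hsqrt : HasDerivAt (fun t : ℝ => √(t ^ 2 + β ^ 2)) (2 * t / (2 * √(t ^ 2 + β ^ 2))) t :=
    (by simpa using (hasDerivAt_pow 2 t).add_const (β ^ 2) :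
      HasDerivAt (fun t : ℝ => t ^ 2 + β ^ 2) (2 * t) t).sqrt (by positivity)
  refine (hlin.sub hsqrt).congr_deriv ?_
  rw [sqrt_one_add_div_sq hβ]
  field_simp
  ring

lemma hypentropy_abs (β t : ℝ) : hypentropy β |t| = hypentropy β t := by
  rcases abs_cases t with ⟨h, -⟩ | ⟨h, -⟩
  · rw [h]
  · rw [hypentropy, hypentropy, h, neg_div, arsinh_neg, neg_sq, neg_mul_neg]

lemma hypentropyBregman_zero_right (hβ : 0 ≤ β) (x : ℝ) :
    hypentropyBregman β x 0 = hypentropy β x + β := by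
  simp [hypentropyBregman, hypentropy, Real.sqrt_sq hβ]

lemma hypentropy_add_le_of_log_le {B b : ℝ → ℝ} (hβ : 0 < β) (hB0 : B 0 = 0)
    (hB : ∀ t, HasDerivAt B (b t) t) (hb : ∀ t, 0 ≤ t → log (t + √(t ^ 2 + β ^ 2)) ≤ b t)
    {u : ℝ} (hu : 0 ≤ u) : hypentropy β u + β ≤ u * log (1 / β) + B u := by
  have hf (t : ℝ) : HasDerivAt (fun t => hypentropy β t + β) (arsinh (t / β)) t :=
    (hasDerivAt_hypentropy hβ t).add_const β
  have hg (t : ℝ) : HasDerivAt (fun t => t * log (1 / β) + B t) (log (1 / β) + b t) t := by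
    simpa only [one_mul] using ((hasDerivAt_id' t).mul_const (log (1 / β))).fun_add (hB t)
  refine image_le_of_deriv_right_le_deriv_boundary (f := fun t => hypentropy β t + β) (b := u)
    (fun t _ => (hf t).continuousAt.continuousWithinAt) (fun t _ => (hf t).hasDerivWithinAt)
    ?_ (fun t _ => (hg t).continuousAt.continuousWithinAt) (fun t _ => (hg t).hasDerivWithinAt)
    (fun t ht => ?_) ⟨hu, le_rfl⟩
  · simp [hypentropy, hB0, Real.sqrt_sq hβ.le]
  · rw [arsinh_div_eq_log hβ]
    linarith [hb t ht.1]

lemma log_add_sqrt_le_self (hβ0 : 0 < β) (hβ1 : β ≤ 1) {t : ℝ} (ht : 0 ≤ t) :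
    log (t + √(t ^ 2 + β ^ 2)) ≤ t := by
  have hs : √(t ^ 2 + β ^ 2) ≤ √(1 + t ^ 2) := Real.sqrt_le_sqrt (by nlinarith)
  calc log (t + √(t ^ 2 + β ^ 2)) ≤ arsinh t :=
        Real.log_le_log (by positivity) (by linarith)
    _ ≤ arsinh (sinh t) := arsinh_le_arsinh.2 (self_le_sinh_iff.2 ht)
    _ = t := arsinh_sinh t

lemma log_add_sqrt_le_two_mul (hβ : 0 < β) {t : ℝ} (ht : 0 ≤ t) :
    log (t + √(t ^ 2 + β ^ 2)) ≤ 2 * t - (1 - β) := by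
  have hs : √(t ^ 2 + β ^ 2) ≤ t + β :=
    Real.sqrt_le_iff.2 ⟨by positivity, by nlinarith⟩
  have := Real.log_le_sub_one_of_pos (x := t + √(t ^ 2 + β ^ 2)) (by positivity)
  linarith

lemma hypentropy_add_le_half_sq (hβ0 : 0 < β) (hβ1 : β ≤ 1) (t : ℝ) :
    hypentropy β t + β ≤ |t| * log (1 / β) + t ^ 2 / 2 := by
  rw [← hypentropy_abs, ← sq_abs]
  refine hypentropy_add_le_of_log_le (B := fun t => t ^ 2 / 2) hβ0 (by simp) (fun t => ?_)
    (fun t ht => log_add_sqrt_le_self hβ0 hβ1 ht) (abs_nonneg t)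
  simpa using (hasDerivAt_pow 2 t).div_const 2

lemma hypentropy_add_le_sq_sub (hβ : 0 < β) (t : ℝ) :
    hypentropy β t + β ≤ |t| * log (1 / β) + (t ^ 2 - (1 - β) * |t|) := by
  rw [← hypentropy_abs, ← sq_abs]
  refine hypentropy_add_le_of_log_le (B := fun t => t ^ 2 - (1 - β) * t) hβ (by simp) (fun t => ?_)
    (fun t ht => log_add_sqrt_le_two_mul hβ ht) (abs_nonneg t)
  simpa using (hasDerivAt_pow 2 t).fun_sub ((hasDerivAt_id' t).const_mul (1 - β))

lemma hypentropyBregman_le (hβ : 0 < β) {x a : ℝ} (hx : 0 ≤ x) (ha : 0 ≤ a) :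
    hypentropyBregman β x a ≤ hypentropyBregman β x 0 + (√(a ^ 2 + β ^ 2) - β) := by
  have := mul_nonneg hx (arsinh_nonneg_iff.2 (div_nonneg ha hβ.le))
  rw [hypentropyBregman_zero_right hβ.le]
  simp only [hypentropyBregman, hypentropy]
  linarith

end Hypentropy

section Sums

variable {ι : Type*} [Fintype ι]

lemma fderiv_sum_comp_apply {f f' : ℝ → ℝ} (hf : ∀ t, HasDerivAt f (f' t) t) (y v : ι → ℝ) :
    fderiv ℝ (fun z : ι → ℝ => ∑ i, f (z i)) y v = ∑ i, f' (y i) * v i := by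
  have : HasFDerivAt (fun z : ι → ℝ => ∑ i, f (z i))
      (∑ i, f' (y i) • ContinuousLinearMap.proj (R := ℝ) (φ := fun _ : ι => ℝ) i) y :=
    HasFDerivAt.fun_sum fun i _ => (hf (y i)).comp_hasFDerivAt y (hasFDerivAt_apply i y)
  simp [this.fderiv]

lemma one_le_sum_abs_of_sum_sq_eq_one {x : ι → ℝ} (hx : ∑ i, x i ^ 2 = 1) :
    1 ≤ ∑ i, |x i| := by
  have habs (i : ι) : |x i| ≤ 1 := by
    rw [← sq_le_one_iff_abs_le_one, ← hx]
    exact single_le_sum (f := fun j => x j ^ 2) (fun j _ => sq_nonneg _) (mem_univ i)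
  calc 1 = ∑ i, |x i| ^ 2 := by simp [hx]
    _ ≤ ∑ i, |x i| := sum_le_sum fun i _ => by nlinarith [abs_nonneg (x i), habs i]

lemma sum_hypentropyBregman_zero_le {β : ℝ} (hβ0 : 0 < β) (hβ1 : β ≤ 1) {x : ι → ℝ}
    (hx : ∑ i, x i ^ 2 = 1) :
    ∑ i, hypentropyBregman β (x i) 0 ≤ (∑ i, |x i|) * log (1 / β) + min (1 / 2) β := by
  simp only [hypentropyBregman_zero_right hβ0.le]
  rw [← min_add_add_left]
  refine le_min ?_ ?_
  · calc ∑ i, (hypentropy β (x i) + β) ≤ ∑ i, (|x i| * log (1 / β) + x i ^ 2 / 2) :=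
          sum_le_sum fun i _ => hypentropy_add_le_half_sq hβ0 hβ1 (x i)
      _ = (∑ i, |x i|) * log (1 / β) + 1 / 2 := by
          rw [sum_add_distrib, ← sum_mul, ← sum_div, hx]
  · have := mul_le_mul_of_nonneg_left (one_le_sum_abs_of_sum_sq_eq_one hx) (sub_nonneg.2 hβ1)
    calc ∑ i, (hypentropy β (x i) + β)
          ≤ ∑ i, (|x i| * log (1 / β) + (x i ^ 2 - (1 - β) * |x i|)) :=
          sum_le_sum fun i _ => hypentropy_add_le_sq_sub hβ0 (x i)
      _ = (∑ i, |x i|) * log (1 / β) + (1 - (1 - β) * ∑ i, |x i|) := by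
          rw [sum_add_distrib, sum_sub_distrib, ← sum_mul, ← mul_sum, hx]
      _ ≤ (∑ i, |x i|) * log (1 / β) + β := by linarith

lemma sum_hypentropyBregman_single_le [DecidableEq ι] {β a : ℝ} (hβ : 0 < β) (ha : 0 ≤ a)
    (x : ι → ℝ) {i₀ : ι} (hx : 0 ≤ x i₀) :
    ∑ i, hypentropyBregman β (x i) ((Pi.single i₀ a : ι → ℝ) i)
      ≤ ∑ i, hypentropyBregman β (x i) 0 + (√(a ^ 2 + β ^ 2) - β) := by
  rw [← Fintype.sum_pi_single' i₀ (√(a ^ 2 + β ^ 2) - β), ← sum_add_distrib]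
  refine sum_le_sum fun i _ => ?_
  rcases eq_or_ne i i₀ with rfl | hi
  · simpa using hypentropyBregman_le hβ hx ha
  · simp [Pi.single_eq_of_ne hi]

end Sums

lemma sqrt_sq_add_sq_sub_add_min_le {a β : ℝ} (hβ : 0 < β) (ha : a ^ 2 ≤ 2 / 3) :
    √(a ^ 2 + β ^ 2) - β + min (1 / 2) β ≤ 1 := by
  rcases le_or_gt √(a ^ 2 + β ^ 2) 1 with hq | hq
  · linarith [min_le_right (1 / 2 : ℝ) β]
  · have hq2 : 1 < a ^ 2 + β ^ 2 := by
      rwa [Real.lt_sqrt zero_le_one, one_pow] at hq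
    have hβ' : 5 / 12 ≤ β := by nlinarith
    have : √(a ^ 2 + β ^ 2) ≤ β + 1 / 2 := Real.sqrt_le_iff.2 ⟨by positivity, by nlinarith⟩
    linarith [min_le_left (1 / 2 : ℝ) β]

theorem initial_bregman_bound_general (n m : ℕ)
    (β : ℝ) (hβ0 : 0 < β) (hβ1 : β < 1)
    (Φ : (Fin n → ℝ) → ℝ)
    (hΦ : ∀ y : Fin n → ℝ,
      Φ y = ∑ i, (y i * Real.arsinh (y i / β) - Real.sqrt ((y i) ^ 2 + β ^ 2)))
    (xs : Fin n → ℝ) (hxs : ∑ i, (xs i) ^ 2 = 1)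
    (i₀ : Fin n) (hi₀ : 0 < xs i₀)
    (θ : ℝ)
    (hθ1 : Real.sqrt (1 - 9 * Real.sqrt (Real.log n / m)) ≤ θ)
    (hθ3 : θ ≤ Real.sqrt 2)
    (X0 : Fin n → ℝ)
    (hX0 : ∀ i, X0 i = if i = i₀ then θ / Real.sqrt 3 else 0) :
    Φ xs - Φ X0 - fderiv ℝ Φ X0 (fun i => xs i - X0 i) ≤
      (∑ i, |xs i|) * Real.log (1 / β) + 1 := by
  obtain rfl : Φ = fun y => ∑ i, hypentropy β (y i) := funext hΦ
  obtain rfl : X0 = Pi.single i₀ (θ / √3) := funext fun i => by rw [hX0, Pi.single_apply]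
  set a := θ / √3
  have hθ0 : 0 ≤ θ := (Real.sqrt_nonneg _).trans hθ1
  have ha0 : 0 ≤ a := by positivity
  have ha2 : a ^ 2 ≤ 2 / 3 := by
    have : θ ^ 2 ≤ 2 := by simpa using pow_le_pow_left₀ hθ0 hθ3 2
    rw [div_pow, Real.sq_sqrt (by norm_num)]
    linarith
  have hD : ∑ i, hypentropy β (xs i) - ∑ i, hypentropy β ((Pi.single i₀ a : Fin n → ℝ) i)
      - fderiv ℝ (fun y : Fin n → ℝ => ∑ i, hypentropy β (y i)) (Pi.single i₀ a)
        (fun i => xs i - (Pi.single i₀ a : Fin n → ℝ) i)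
      = ∑ i, hypentropyBregman β (xs i) ((Pi.single i₀ a : Fin n → ℝ) i) := by
    rw [fderiv_sum_comp_apply (hasDerivAt_hypentropy hβ0), ← sum_sub_distrib,
      ← sum_sub_distrib]
    rfl
  rw [hD]
  linarith [sum_hypentropyBregman_single_le hβ0 ha0 xs hi₀.le,
    sum_hypentropyBregman_zero_le hβ0 hβ1.le hxs, sqrt_sq_add_sq_sub_add_min_le hβ0 ha2]

/-- Bound on the initial Bregman divergence of the hypentropy mirror map under
the sparse initialization. -/
theorem initial_bregman_bound (n m : ℕ) (hn : 1 ≤ n) (hm : 1 ≤ m)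
    (β : ℝ) (hβ0 : 0 < β) (hβ1 : β < 1)
    (Φ : (Fin n → ℝ) → ℝ)
    (hΦ : ∀ y : Fin n → ℝ,
      Φ y = ∑ i, (y i * Real.arsinh (y i / β) - Real.sqrt ((y i) ^ 2 + β ^ 2)))
    (xs : Fin n → ℝ) (hxs : ∑ i, (xs i) ^ 2 = 1)
    (i₀ : Fin n) (hi₀ : 0 < xs i₀)
    (θ : ℝ)
    (hθ1 : Real.sqrt (1 - 9 * Real.sqrt (Real.log n / m)) ≤ θ)
    (hθ2 : θ ≤ Real.sqrt (1 + 9 * Real.sqrt (Real.log n / m)))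
    (hθ3 : θ ≤ Real.sqrt 2)
    (X0 : Fin n → ℝ)
    (hX0 : ∀ i, X0 i = if i = i₀ then θ / Real.sqrt 3 else 0) :
    Φ xs - Φ X0 - fderiv ℝ Φ X0 (fun i => xs i - X0 i) ≤
      (∑ i, |xs i|) * Real.log (1 / β) + 1 :=
  initial_bregman_bound_general n m β hβ0 hβ1 Φ hΦ xs hxs i₀ hi₀ θ hθ1 hθ3 X0 hX0
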